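/- Let n ≥ 6 and let Γ' be a signed graph of order n that attains the maximum largest eigenvalue λ1 among all unbalanced, negative-C4-free signed graphs of order n, suppose A(Γ') has a nonnegative unit eigenvector corresponding to λ1(Γ'), suppose Γ' has exactly one negative edge v1v2, and suppose v3 is a vertex of degree n − 1 adjacent to both v1 and v2. Then the signed subgraph of Γ' induced on V(Γ') ∖ {v1, v2} is the all-positive complete graph (K_{n−2}, +). -/

import Mathlib

open scoped BigOperators

/-- A signed graph on the vertex set `Fin n`: a simple graph together with a
symmetric `±1` sign on each edge. -/
structure SignedGraph (n : ℕ) where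
  G : SimpleGraph (Fin n)
  sign : Fin n → Fin n → ℤ
  sign_symm : ∀ i j, sign i j = sign j i
  sign_pm : ∀ i j, G.Adj i j → sign i j = 1 ∨ sign i j = -1

namespace SignedGraph

variable {n : ℕ}

open Classical in
/-- The adjacency matrix of a signed graph, as a real matrix. -/
noncomputable def adjMatrix (Γ : SignedGraph n) : Matrix (Fin n) (Fin n) ℝ :=
  fun i j => if Γ.G.Adj i j then (Γ.sign i j : ℝ) else 0

/-- The largest eigenvalue (the index) of a signed graph. -/
noncomputable def lambda1 (Γ : SignedGraph n) : ℝ :=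
  sSup (spectrum ℝ Γ.adjMatrix)

/-- The sign of an unordered edge. -/
def signEdge (Γ : SignedGraph n) : Sym2 (Fin n) → ℤ :=
  Sym2.lift ⟨Γ.sign, Γ.sign_symm⟩

/-- The sign of a walk: the product of the signs of its edges. -/
def walkSign (Γ : SignedGraph n) {u v : Fin n} (w : Γ.G.Walk u v) : ℤ :=
  (w.edges.map Γ.signEdge).prod

/-- A negative cycle: a cycle whose sign is `-1`
(equivalently, with an odd number of negative edges). -/
def IsNegCycle (Γ : SignedGraph n) {u : Fin n} (c : Γ.G.Walk u u) : Prop :=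
  c.IsCycle ∧ Γ.walkSign c = -1

/-- A signed graph is unbalanced if it contains a negative cycle. -/
def Unbalanced (Γ : SignedGraph n) : Prop :=
  ∃ (u : Fin n) (c : Γ.G.Walk u u), Γ.IsNegCycle c

/-- A signed graph is negative-`C₄`-free if it contains no negative 4-cycle. -/
def NegC4Free (Γ : SignedGraph n) : Prop :=
  ∀ (u : Fin n) (c : Γ.G.Walk u u), c.IsCycle → c.length = 4 → Γ.walkSign c ≠ -1

end SignedGraph

/-- The signed graph `Γ₁`: vertices `2,…,n-1` induce an all-positive complete
graph, vertices `0` and `1` are joined to each other by a negative edge and to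
vertex `2` by positive edges, and have no other neighbours. -/
def Gamma1 (n : ℕ) : SignedGraph n where
  G :=
    { Adj := fun i j => i ≠ j ∧ (2 ≤ min i.val j.val ∨ max i.val j.val ≤ 2)
      symm := by
        constructor
        intro i j h
        refine ⟨Ne.symm h.1, ?_⟩
        rw [min_comm, max_comm]
        exact h.2
      loopless := by constructor; intro i h; exact h.1 rfl }
  sign := fun i j =>
    if (i.val = 0 ∧ j.val = 1) ∨ (i.val = 1 ∧ j.val = 0) then -1 else 1
  sign_symm := by
    intro i j
    try dsimp only
    by_cases h : (i.val = 0 ∧ j.val = 1) ∨ (i.val = 1 ∧ j.val = 0)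
    · rw [if_pos h, if_pos (by tauto)]
    · rw [if_neg h, if_neg (by tauto)]
  sign_pm := by
    intro i j _
    try dsimp only
    by_cases h : (i.val = 0 ∧ j.val = 1) ∨ (i.val = 1 ∧ j.val = 0)
    · rw [if_pos h]; right; rfl
    · rw [if_neg h]; left; rfl

/-- The signed graph `Γ₂`: vertices `4,…,n-1` induce an all-positive complete
graph, vertices `2` and `3` are joined by positive edges to all of `4,…,n-1`
(but not to each other), vertices `0` and `1` are joined to each other by a
negative edge and to `2` and `3` by positive edges, and have no other
neighbours. -/
def Gamma2 (n : ℕ) : SignedGraph n where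
  G :=
    { Adj := fun i j => i ≠ j ∧
        ((i.val ≤ 1 ∧ j.val ≤ 3) ∨ (j.val ≤ 1 ∧ i.val ≤ 3) ∨
         (2 ≤ i.val ∧ i.val ≤ 3 ∧ 4 ≤ j.val) ∨ (2 ≤ j.val ∧ j.val ≤ 3 ∧ 4 ≤ i.val) ∨
         (4 ≤ i.val ∧ 4 ≤ j.val))
      symm := by
        constructor
        intro i j h
        exact ⟨Ne.symm h.1, by tauto⟩
      loopless := by constructor; intro i h; exact h.1 rfl }
  sign := fun i j =>
    if (i.val = 0 ∧ j.val = 1) ∨ (i.val = 1 ∧ j.val = 0) then -1 else 1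
  sign_symm := by
    intro i j
    try dsimp only
    by_cases h : (i.val = 0 ∧ j.val = 1) ∨ (i.val = 1 ∧ j.val = 0)
    · rw [if_pos h, if_pos (by tauto)]
    · rw [if_neg h, if_neg (by tauto)]
  sign_pm := by
    intro i j _
    try dsimp only
    by_cases h : (i.val = 0 ∧ j.val = 1) ∨ (i.val = 1 ∧ j.val = 0)
    · rw [if_pos h]; right; rfl
    · rw [if_neg h]; left; rfl


/-- The all-negative complete signed graph `(K_n, -)`. -/
def NegKn (n : ℕ) : SignedGraph n where
  G := ⊤
  sign := fun _ _ => -1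
  sign_symm := fun _ _ => rfl
  sign_pm := fun _ _ _ => Or.inr rfl

/-- `Γ` is switching equivalent to `Γ'` (up to a relabelling of the vertices):
there is a bijection of the vertices matching the underlying graphs and a
`±1`-valued switching function `s` relating the two sign functions. -/
def SwitchingEquiv {n : ℕ} (Γ Γ' : SignedGraph n) : Prop :=
  ∃ e : Fin n ≃ Fin n, ∃ s : Fin n → ℤ, (∀ i, s i = 1 ∨ s i = -1) ∧
    (∀ i j, Γ.G.Adj i j ↔ Γ'.G.Adj (e i) (e j)) ∧
    (∀ i j, Γ.G.Adj i j → Γ.sign i j = s i * Γ'.sign (e i) (e j) * s j)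

/-!
All edges other than `ab` are positive. A neighbour `u ∉ {b, c}` of `a` would close the negative
4-cycle `b a u c`, so `N(a) ⊆ {b, c}` and likewise `N(b) ⊆ {a, c}`. Since `c` is adjacent to every
vertex through positive edges, the eigen-equation forces the nonnegative eigenvector `x` to be
positive off `{a, b}`. If `i, j ∉ {a, b}` were non-adjacent, adding the positive edge `ij` would
keep the graph unbalanced and negative-`C₄`-free, while its Rayleigh quotient at `x` is
`λ₁ + 2 xᵢ xⱼ > λ₁`, contradicting maximality.
-/

open Matrix

theorem Matrix.IsHermitian.dotProduct_mulVec_le_sSup_spectrum {ι : Type*} [Fintype ι]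
    [DecidableEq ι] {A : Matrix ι ι ℝ} (hA : A.IsHermitian) (y : ι → ℝ) :
    y ⬝ᵥ A *ᵥ y ≤ sSup (spectrum ℝ A) * (y ⬝ᵥ y) := by
  set U : Matrix ι ι ℝ := (hA.eigenvectorUnitary : Matrix ι ι ℝ)
  set z := star U *ᵥ y with hz
  have hU : U * star U = 1 := Matrix.mem_unitaryGroup_iff.mp hA.eigenvectorUnitary.2
  have hdot : ∀ w, y ⬝ᵥ U *ᵥ w = z ⬝ᵥ w := fun w => by
    rw [hz, dotProduct_mulVec, star_eq_conjTranspose, conjTranspose_eq_transpose_of_trivial,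
      mulVec_transpose]
  have hzz : y ⬝ᵥ y = z ⬝ᵥ z := by
    rw [← hdot, mulVec_mulVec, hU, one_mulVec]
  have hquad : y ⬝ᵥ A *ᵥ y = ∑ i, hA.eigenvalues i * (z i * z i) := by
    conv_lhs => rw [hA.spectral_theorem, Unitary.conjStarAlgAut_apply]
    rw [← mulVec_mulVec, ← mulVec_mulVec, hdot]
    simp only [dotProduct, mulVec_diagonal, Function.comp, RCLike.ofReal_real_eq_id, id_eq]
    exact Finset.sum_congr rfl fun i _ => by ring
  have hle : ∀ i, hA.eigenvalues i ≤ sSup (spectrum ℝ A) := fun i =>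
    le_csSup (finite_real_spectrum (A := A)).bddAbove (hA.eigenvalues_mem_spectrum_real i)
  rw [hquad, hzz, dotProduct, Finset.mul_sum]
  exact Finset.sum_le_sum fun i _ => mul_le_mul_of_nonneg_right (hle i) (mul_self_nonneg _)

namespace SignedGraph

variable {n : ℕ}

section

variable (Γ : SignedGraph n)

lemma adjMatrix_isHermitian : Γ.adjMatrix.IsHermitian := by
  ext p q
  simp only [adjMatrix, conjTranspose_apply, star_trivial]
  rw [Γ.G.adj_comm q p, Γ.sign_symm q p]

lemma dotProduct_mulVec_adjMatrix_le_lambda1 (x : Fin n → ℝ) :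
    x ⬝ᵥ Γ.adjMatrix *ᵥ x ≤ Γ.lambda1 * (x ⬝ᵥ x) :=
  Γ.adjMatrix_isHermitian.dotProduct_mulVec_le_sSup_spectrum x

end

variable {Γ : SignedGraph n}

lemma sign_eq_one_of_ne {a b p q : Fin n}
    (huniq : ∀ i j, Γ.G.Adj i j → Γ.sign i j = -1 → s(i, j) = s(a, b))
    (hpq : Γ.G.Adj p q) (hne : s(p, q) ≠ s(a, b)) : Γ.sign p q = 1 :=
  (Γ.sign_pm p q hpq).resolve_right (mt (huniq p q hpq) hne)

@[simp] lemma signEdge_mk (p q : Fin n) : Γ.signEdge s(p, q) = Γ.sign p q := rfl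

lemma negC4Free_iff : Γ.NegC4Free ↔ ∀ p q r t, Γ.G.Adj p q → Γ.G.Adj q r → Γ.G.Adj r t →
    Γ.G.Adj t p → p ≠ r → q ≠ t → Γ.sign p q * Γ.sign q r * Γ.sign r t * Γ.sign t p ≠ -1 := by
  constructor
  · intro hfree p q r t hpq hqr hrt htp hpr hqt
    have := hfree p (.cons hpq (.cons hqr (.cons hrt (.cons htp .nil))))
    simpa [SimpleGraph.Walk.cons_isCycle_iff, walkSign, mul_assoc, hpq.ne, hpq.ne', hqr.ne,
      hrt.ne, htp.ne, hpr, hpr.symm, hqt, hqt.symm] using this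
  · rintro h u (_ | ⟨h1, _ | ⟨h2, _ | ⟨h3, _ | ⟨h4, _ | ⟨_, _⟩⟩⟩⟩⟩) hcyc hlen <;>
      simp only [SimpleGraph.Walk.length_cons, SimpleGraph.Walk.length_nil] at hlen <;>
      try omega
    have hnodup := hcyc.support_nodup
    simp only [SimpleGraph.Walk.support_cons, SimpleGraph.Walk.support_nil, List.tail_cons,
      List.nodup_cons, List.mem_cons, List.not_mem_nil] at hnodup
    simpa [walkSign, mul_assoc] using h _ _ _ _ h1 h2 h3 h4 (by tauto) (by tauto)

lemma eq_zero_of_adj_of_mulVec_eq_smul {x : Fin n → ℝ} {μ : ℝ}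
    (hx : Γ.adjMatrix *ᵥ x = μ • x) (hnn : ∀ i, 0 ≤ x i) {p q : Fin n}
    (hp : ∀ q, Γ.G.Adj p q → Γ.sign p q = 1) (hxp : x p = 0) (hpq : Γ.G.Adj p q) : x q = 0 := by
  have hnonneg : ∀ r, 0 ≤ Γ.adjMatrix p r * x r := fun r => by
    by_cases h : Γ.G.Adj p r <;> simp [adjMatrix, h, hp, hnn]
  have hsum : ∑ r, Γ.adjMatrix p r * x r = 0 := by
    simpa [mulVec, dotProduct, hxp] using congrFun hx p
  have := (Finset.sum_eq_zero_iff_of_nonneg fun r _ => hnonneg r).mp hsum q (Finset.mem_univ q)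
  simpa [adjMatrix, hpq, hp q hpq] using this

lemma pos_of_mulVec_eq_smul {x : Fin n → ℝ} {μ : ℝ}
    (hx : Γ.adjMatrix *ᵥ x = μ • x) (hnn : ∀ i, 0 ≤ x i) (hx0 : x ≠ 0) {c u : Fin n}
    (hc : ∀ j, j ≠ c → Γ.G.Adj c j) (hcpos : ∀ q, Γ.G.Adj c q → Γ.sign c q = 1)
    (hupos : ∀ q, Γ.G.Adj u q → Γ.sign u q = 1) : 0 < x u := by
  refine (hnn u).lt_of_ne fun hxu => hx0 ?_
  have hxc : x c = 0 := by
    by_cases huc : u = c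
    · rw [← huc, hxu]
    · exact eq_zero_of_adj_of_mulVec_eq_smul hx hnn hupos hxu.symm (hc u huc).symm
  funext q
  by_cases hqc : q = c
  · rw [hqc, hxc, Pi.zero_apply]
  · exact eq_zero_of_adj_of_mulVec_eq_smul hx hnn hcpos hxc (hc q hqc)

lemma eq_or_eq_of_adj_of_negC4Free (hfree : Γ.NegC4Free) {a b c : Fin n}
    (huniq : ∀ i j, Γ.G.Adj i j → Γ.sign i j = -1 → s(i, j) = s(a, b))
    (hab : Γ.G.Adj a b) (hneg : Γ.sign a b = -1) (hca : c ≠ a) (hcb : Γ.G.Adj c b)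
    (hc : ∀ j, j ≠ c → Γ.G.Adj c j) {u : Fin n} (hau : Γ.G.Adj a u) : u = b ∨ u = c := by
  by_contra! ⟨hub, huc⟩
  have huc' : Γ.G.Adj u c := (hc u huc).symm
  have hu_ab : u ∉ s(a, b) := by
    simpa [Sym2.mem_iff] using ⟨hau.ne', hub⟩
  refine negC4Free_iff.mp hfree b a u c hab.symm hau huc' hcb (Ne.symm hub) (Ne.symm hca) ?_
  rw [Γ.sign_symm b a, hneg,
    sign_eq_one_of_ne huniq hau (by rwa [Ne, Sym2.congr_right]),
    sign_eq_one_of_ne huniq huc' (fun h => hu_ab (h ▸ Sym2.mem_mk_left u c)),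
    sign_eq_one_of_ne huniq hcb (by rwa [Ne, Sym2.congr_left])]
  norm_num

lemma negC4Free_of_forall_adj {a b c : Fin n}
    (huniq : ∀ i j, Γ.G.Adj i j → Γ.sign i j = -1 → s(i, j) = s(a, b))
    (ha : ∀ u, Γ.G.Adj a u → u = b ∨ u = c) (hb : ∀ u, Γ.G.Adj b u → u = a ∨ u = c) :
    Γ.NegC4Free := by
  -- a 4-cycle through the edge `ab` would have to pass through `c` twice
  have hnot_ab : ∀ p q r t, Γ.G.Adj q r → Γ.G.Adj r t → Γ.G.Adj t p → p ≠ r → q ≠ t →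
      s(p, q) ≠ s(a, b) := by
    intro p q r t hqr hrt htp hpr hqt hpq
    rcases Sym2.eq_iff.mp hpq with ⟨rfl, rfl⟩ | ⟨rfl, rfl⟩
    · exact hrt.ne (((hb r hqr).resolve_left hpr.symm).trans
        ((ha t htp.symm).resolve_left hqt.symm).symm)
    · exact hrt.ne (((ha r hqr).resolve_left hpr.symm).trans
        ((hb t htp.symm).resolve_left hqt.symm).symm)
  rw [negC4Free_iff]
  intro p q r t hpq hqr hrt htp hpr hqt
  rw [sign_eq_one_of_ne huniq hpq (hnot_ab p q r t hqr hrt htp hpr hqt),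
    sign_eq_one_of_ne huniq hqr (hnot_ab q r t p hrt htp hpq hqt hpr.symm),
    sign_eq_one_of_ne huniq hrt (hnot_ab r t p q htp hpq hqr hpr.symm hqt.symm),
    sign_eq_one_of_ne huniq htp (hnot_ab t p q r hpq hqr hrt hqt.symm hpr)]
  norm_num

section

variable (Γ) in
def addEdge (i j : Fin n) : SignedGraph n where
  G := Γ.G ⊔ SimpleGraph.edge i j
  sign p q := if s(p, q) = s(i, j) then 1 else Γ.sign p q
  sign_symm p q := by rw [Sym2.eq_swap, Γ.sign_symm]
  sign_pm p q h := by
    split_ifs with hpq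
    · exact Or.inl rfl
    · exact Γ.sign_pm p q
        (h.resolve_right fun he => hpq ((SimpleGraph.adj_edge _ _).mp he).1.symm)

variable {i j : Fin n}

lemma addEdge_adj_iff_of_ne {p q : Fin n} (hpi : p ≠ i) (hpj : p ≠ j) :
    (Γ.addEdge i j).G.Adj p q ↔ Γ.G.Adj p q := by
  simp [addEdge, SimpleGraph.edge_adj, hpi, hpj]

lemma addEdge_sign_of_ne {p q : Fin n} (h : s(p, q) ≠ s(i, j)) :
    (Γ.addEdge i j).sign p q = Γ.sign p q := if_neg h

lemma addEdge_sign_eq_neg_one {p q : Fin n} (hpq : (Γ.addEdge i j).G.Adj p q)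
    (hneg : (Γ.addEdge i j).sign p q = -1) : Γ.G.Adj p q ∧ Γ.sign p q = -1 := by
  by_cases he : s(p, q) = s(i, j)
  · exact absurd ((if_pos he).symm.trans hneg) (by norm_num)
  rw [addEdge_sign_of_ne he] at hneg
  exact ⟨hpq.resolve_right fun h => he ((SimpleGraph.adj_edge _ _).mp h).1.symm, hneg⟩

lemma Unbalanced.addEdge (hub : Γ.Unbalanced) (hij : ¬Γ.G.Adj i j) :
    (Γ.addEdge i j).Unbalanced := by
  obtain ⟨u, c, hcyc, hsign⟩ := hub
  have hle : Γ.G ≤ (Γ.addEdge i j).G := le_sup_left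
  refine ⟨u, c.mapLe hle, hcyc.mapLe hle, ?_⟩
  rw [walkSign, SimpleGraph.Walk.edges_mapLe_eq_edges, ← hsign, walkSign]
  refine congrArg List.prod (List.map_congr_left fun e he => ?_)
  induction e using Sym2.ind with
  | h p q =>
    have hpq : Γ.G.Adj p q := c.adj_of_mem_edges he
    refine addEdge_sign_of_ne fun h => hij ?_
    rcases Sym2.eq_iff.mp h with ⟨rfl, rfl⟩ | ⟨rfl, rfl⟩
    exacts [hpq, hpq.symm]

lemma adjMatrix_addEdge (hne : i ≠ j) (hij : ¬Γ.G.Adj i j) :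
    (Γ.addEdge i j).adjMatrix = Γ.adjMatrix + single i j 1 + single j i 1 := by
  classical
  ext p q
  by_cases he : s(p, q) = s(i, j)
  · have hji : ¬Γ.G.Adj j i := fun h => hij h.symm
    rcases Sym2.eq_iff.mp he with ⟨rfl, rfl⟩ | ⟨rfl, rfl⟩
    · simp [adjMatrix, addEdge, hij, hne, SimpleGraph.edge_adj]
    · simp [adjMatrix, addEdge, hji, hne.symm, SimpleGraph.edge_adj, Sym2.eq_swap]
  · have hedge : ¬(SimpleGraph.edge i j).Adj p q :=
      fun h => he ((SimpleGraph.adj_edge _ _).mp h).1.symm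
    have hij' : ¬(i = p ∧ j = q) := fun ⟨hi, hj⟩ => he (by rw [hi, hj])
    have hji' : ¬(j = p ∧ i = q) := fun ⟨hj, hi⟩ => he (by rw [hi, hj, Sym2.eq_swap])
    rw [Matrix.add_apply, Matrix.add_apply, single_apply, single_apply, if_neg hij', if_neg hji',
      add_zero, add_zero]
    exact if_congr (or_iff_left hedge) (by rw [addEdge_sign_of_ne he]) rfl

lemma dotProduct_mulVec_adjMatrix_addEdge (hne : i ≠ j) (hij : ¬Γ.G.Adj i j) (x : Fin n → ℝ) :
    x ⬝ᵥ (Γ.addEdge i j).adjMatrix *ᵥ x = x ⬝ᵥ Γ.adjMatrix *ᵥ x + 2 * (x i * x j) := by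
  rw [adjMatrix_addEdge hne hij, add_mulVec, add_mulVec, dotProduct_add, dotProduct_add,
    single_mulVec_eq, single_mulVec_eq, dotProduct_smul, dotProduct_smul, dotProduct_single,
    dotProduct_single]
  simp only [smul_eq_mul]
  ring

lemma lt_lambda1_addEdge {x : Fin n → ℝ} {μ : ℝ} (hx : Γ.adjMatrix *ᵥ x = μ • x)
    (hunit : x ⬝ᵥ x = 1) (hne : i ≠ j) (hij : ¬Γ.G.Adj i j) (hxij : 0 < x i * x j) :
    μ < (Γ.addEdge i j).lambda1 :=
  calc μ = x ⬝ᵥ Γ.adjMatrix *ᵥ x := by rw [hx, dotProduct_smul, hunit, smul_eq_mul, mul_one]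
    _ < x ⬝ᵥ (Γ.addEdge i j).adjMatrix *ᵥ x := by
      rw [dotProduct_mulVec_adjMatrix_addEdge hne hij]; linarith
    _ ≤ (Γ.addEdge i j).lambda1 := by
      simpa [hunit] using (Γ.addEdge i j).dotProduct_mulVec_adjMatrix_le_lambda1 x

end

end SignedGraph

open SignedGraph

theorem extremal_induced_complete_positive_general
    (n : ℕ) (Γ' : SignedGraph n)
    (hub : Γ'.Unbalanced) (hfree : Γ'.NegC4Free)
    (hmax : ∀ Γ : SignedGraph n, Γ.Unbalanced → Γ.NegC4Free → Γ.lambda1 ≤ Γ'.lambda1)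
    (x : Fin n → ℝ) (hx : Γ'.adjMatrix.mulVec x = Γ'.lambda1 • x)
    (hnn : ∀ i, 0 ≤ x i) (hunit : ∑ i, x i ^ 2 = 1)
    (a b c : Fin n) (hab : Γ'.G.Adj a b) (hneg : Γ'.sign a b = -1)
    (huniq : ∀ i j, Γ'.G.Adj i j → Γ'.sign i j = -1 → s(i, j) = s(a, b))
    (hca : Γ'.G.Adj c a) (hcb : Γ'.G.Adj c b)
    (hdeg : ∀ j, j ≠ c → Γ'.G.Adj c j) :
    ∀ i j, i ≠ j → i ≠ a → i ≠ b → j ≠ a → j ≠ b →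
      Γ'.G.Adj i j ∧ Γ'.sign i j = 1 := by
  have hunit' : x ⬝ᵥ x = 1 := by simpa [dotProduct, sq] using hunit
  have hx0 : x ≠ 0 := by rintro rfl; simp at hunit'
  have hsign : ∀ p, p ≠ a → p ≠ b → ∀ q, Γ'.G.Adj p q → Γ'.sign p q = 1 :=
    fun p hpa hpb q hpq => sign_eq_one_of_ne huniq hpq fun h => by
      rw [Sym2.eq_iff] at h; tauto
  have hNa : ∀ u, Γ'.G.Adj a u → u = b ∨ u = c :=
    fun u => eq_or_eq_of_adj_of_negC4Free hfree huniq hab hneg hca.ne hcb hdeg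
  have hNb : ∀ u, Γ'.G.Adj b u → u = a ∨ u = c :=
    fun u => eq_or_eq_of_adj_of_negC4Free hfree (fun i j h hs => (huniq i j h hs).trans
      Sym2.eq_swap) hab.symm (by rwa [Γ'.sign_symm]) hcb.ne hca hdeg
  have hpos : ∀ u, u ≠ a → u ≠ b → 0 < x u := fun u hua hub =>
    pos_of_mulVec_eq_smul hx hnn hx0 hdeg (hsign c hca.ne hcb.ne) (hsign u hua hub)
  intro i j hij hia hib hja hjb
  have hadj : Γ'.G.Adj i j := by
    by_contra hnadj
    have hfree' : (Γ'.addEdge i j).NegC4Free := negC4Free_of_forall_adj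
      (fun p q hpq hs => huniq p q (addEdge_sign_eq_neg_one hpq hs).1
        (addEdge_sign_eq_neg_one hpq hs).2)
      (fun u hu => hNa u ((addEdge_adj_iff_of_ne hia.symm hja.symm).mp hu))
      (fun u hu => hNb u ((addEdge_adj_iff_of_ne hib.symm hjb.symm).mp hu))
    exact (hmax _ (hub.addEdge hnadj) hfree').not_gt
      (lt_lambda1_addEdge hx hunit' hij hnadj (mul_pos (hpos i hia hib) (hpos j hja hjb)))
  exact ⟨hadj, hsign i hia hib j hadj⟩

theorem extremal_induced_complete_positive
    (n : ℕ) (hn : 6 ≤ n) (Γ' : SignedGraph n)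
    (hub : Γ'.Unbalanced) (hfree : Γ'.NegC4Free)
    (hmax : ∀ Γ : SignedGraph n, Γ.Unbalanced → Γ.NegC4Free → Γ.lambda1 ≤ Γ'.lambda1)
    (x : Fin n → ℝ) (hx : Γ'.adjMatrix.mulVec x = Γ'.lambda1 • x)
    (hnn : ∀ i, 0 ≤ x i) (hunit : ∑ i, x i ^ 2 = 1)
    (a b c : Fin n) (hab : Γ'.G.Adj a b) (hneg : Γ'.sign a b = -1)
    (huniq : ∀ i j, Γ'.G.Adj i j → Γ'.sign i j = -1 → s(i, j) = s(a, b))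
    (hca : Γ'.G.Adj c a) (hcb : Γ'.G.Adj c b)
    (hdeg : ∀ j, j ≠ c → Γ'.G.Adj c j) :
    ∀ i j, i ≠ j → i ≠ a → i ≠ b → j ≠ a → j ≠ b →
      Γ'.G.Adj i j ∧ Γ'.sign i j = 1 :=
  extremal_induced_complete_positive_general n Γ' hub hfree hmax x hx hnn hunit a b c hab hneg huniq
    hca hcb hdeg
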